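/- Let x ∈ R^N, y ∈ R^M, Φ an N×m matrix and Φ̃ an M×m matrix with Φ of full column rank m. Let θ̂(x) = (Φ⊤Φ)⁻¹Φ⊤x and θ̂(x,y) = (Φ⊤Φ + Φ̃⊤Φ̃)⁻¹(Φ⊤x + Φ̃⊤y). Then ‖x − Φθ̂(x,y)‖² + ‖y − Φ̃θ̂(x,y)‖² − ‖x − Φθ̂(x)‖² = ‖y − Φ̃θ̂(x)‖² − (y − Φ̃θ̂(x))⊤ Φ̃ (Φ⊤Φ + Φ̃⊤Φ̃)⁻¹ Φ̃⊤ (y − Φ̃θ̂(x)), and this quantity is nonnegative. -/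

import Mathlib

/-! Write `u = x - Φ θ̂(x)` and `δ = θ̂(x,y) - θ̂(x)`. The normal equations give `Φᵀ u = 0` and
`(ΦᵀΦ + Φ̃ᵀΦ̃) δ = Φ̃ᵀ r` with `r = y - Φ̃ θ̂(x)`, so `δ = (ΦᵀΦ + Φ̃ᵀΦ̃)⁻¹ Φ̃ᵀ r` and the quadratic
form on the right is `r ⬝ Φ̃δ = ‖Φδ‖² + ‖Φ̃δ‖²`. Since the new residuals are `u - Φδ` and
`r - Φ̃δ`, Pythagoras (`u ⊥ range Φ`) turns the left-hand side into `‖r - Φ̃δ‖² + ‖Φδ‖²`, which is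
both `‖r‖² - r ⬝ Φ̃δ` and visibly nonnegative. -/

open Matrix

namespace Matrix

variable {R K n l k : Type*} [Fintype k]

section CommRing

variable [Fintype n] [Fintype l] [CommRing R] (Φ : Matrix n k R) (Φt : Matrix l k R)
  {u : n → R} {r : l → R} {δ : k → R}

theorem dotProduct_self_sub_mulVec_of_transpose_mulVec_eq_zero (hu : Φᵀ *ᵥ u = 0) :
    (u - Φ *ᵥ δ) ⬝ᵥ (u - Φ *ᵥ δ) = u ⬝ᵥ u + Φ *ᵥ δ ⬝ᵥ Φ *ᵥ δ := by
  have horth : u ⬝ᵥ Φ *ᵥ δ = 0 := by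
    rw [dotProduct_mulVec, ← mulVec_transpose, hu, zero_dotProduct]
  simp only [dotProduct_sub, sub_dotProduct, dotProduct_comm (Φ *ᵥ δ) u, horth]
  ring

theorem dotProduct_transpose_mul_self_mulVec (v : k → R) :
    v ⬝ᵥ (Φᵀ * Φ) *ᵥ v = Φ *ᵥ v ⬝ᵥ Φ *ᵥ v := by
  rw [← mulVec_mulVec, dotProduct_mulVec, ← mulVec_transpose, transpose_transpose,
    dotProduct_comm]

theorem dotProduct_mulVec_eq_of_mulVec_eq (hδ : (Φᵀ * Φ + Φtᵀ * Φt) *ᵥ δ = Φtᵀ *ᵥ r) :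
    r ⬝ᵥ Φt *ᵥ δ = Φ *ᵥ δ ⬝ᵥ Φ *ᵥ δ + Φt *ᵥ δ ⬝ᵥ Φt *ᵥ δ := by
  calc r ⬝ᵥ Φt *ᵥ δ = δ ⬝ᵥ (Φᵀ * Φ + Φtᵀ * Φt) *ᵥ δ := by
        rw [hδ, dotProduct_mulVec, ← mulVec_transpose, dotProduct_comm]
    _ = _ := by
      rw [add_mulVec, dotProduct_add, dotProduct_transpose_mul_self_mulVec,
        dotProduct_transpose_mul_self_mulVec]

theorem dotProduct_self_sub_dotProduct_mulVec_of_mulVec_eq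
    (hδ : (Φᵀ * Φ + Φtᵀ * Φt) *ᵥ δ = Φtᵀ *ᵥ r) :
    r ⬝ᵥ r - r ⬝ᵥ Φt *ᵥ δ = (r - Φt *ᵥ δ) ⬝ᵥ (r - Φt *ᵥ δ) + Φ *ᵥ δ ⬝ᵥ Φ *ᵥ δ := by
  have h := dotProduct_mulVec_eq_of_mulVec_eq Φ Φt hδ
  simp only [dotProduct_sub, sub_dotProduct, dotProduct_comm (Φt *ᵥ δ) r]
  linear_combination h

end CommRing

theorem mulVec_injective_of_rank_eq_card [Field K] [DecidableEq k] {A : Matrix n k K}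
    (hA : A.rank = Fintype.card k) : Function.Injective A.mulVec := by
  have h := LinearMap.finrank_range_add_finrank_ker A.mulVecLin
  rw [← rank, hA, Module.finrank_fintype_fun_eq_card, Nat.add_eq_left,
    Submodule.finrank_eq_zero, LinearMap.ker_eq_bot] at h
  exact h

theorem posDef_transpose_mul_self_of_rank_eq_card [Fintype n] [DecidableEq k] {A : Matrix n k ℝ}
    (hA : A.rank = Fintype.card k) : (Aᵀ * A).PosDef := by
  simpa using PosDef.conjTranspose_mul_self A (mulVec_injective_of_rank_eq_card hA)

end Matrix

theorem stmt_17 (N M m : ℕ) (x : Fin N → ℝ) (y : Fin M → ℝ)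
    (Φ : Matrix (Fin N) (Fin m) ℝ) (Φt : Matrix (Fin M) (Fin m) ℝ)
    (hΦ : Φ.rank = m) :
    let θx := (Φᵀ * Φ)⁻¹.mulVec (Φᵀ.mulVec x)
    let θxy := (Φᵀ * Φ + Φtᵀ * Φt)⁻¹.mulVec (Φᵀ.mulVec x + Φtᵀ.mulVec y)
    let r := y - Φt.mulVec θx
    ((x - Φ.mulVec θxy) ⬝ᵥ (x - Φ.mulVec θxy)
        + (y - Φt.mulVec θxy) ⬝ᵥ (y - Φt.mulVec θxy)
        - (x - Φ.mulVec θx) ⬝ᵥ (x - Φ.mulVec θx)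
      = r ⬝ᵥ r - r ⬝ᵥ (Φt * (Φᵀ * Φ + Φtᵀ * Φt)⁻¹ * Φtᵀ).mulVec r) ∧
    0 ≤ r ⬝ᵥ r - r ⬝ᵥ (Φt * (Φᵀ * Φ + Φtᵀ * Φt)⁻¹ * Φtᵀ).mulVec r := by
  intro θx θxy r
  set S := Φᵀ * Φ + Φtᵀ * Φt
  have hA : (Φᵀ * Φ).PosDef := posDef_transpose_mul_self_of_rank_eq_card (by simpa using hΦ)
  have hAdet : IsUnit (Φᵀ * Φ).det := hA.det_pos.ne'.isUnit
  have hS : S.PosDef :=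
    hA.add_posSemidef (by simpa using posSemidef_conjTranspose_mul_self Φt)
  have hSdet : IsUnit S.det := hS.det_pos.ne'.isUnit
  set u := x - Φ *ᵥ θx
  set δ := S⁻¹ *ᵥ Φtᵀ *ᵥ r
  have hθx : (Φᵀ * Φ) *ᵥ θx = Φᵀ *ᵥ x := by
    rw [mulVec_mulVec, mul_nonsing_inv _ hAdet, one_mulVec]
  have hu : Φᵀ *ᵥ u = 0 := by rw [mulVec_sub, mulVec_mulVec, hθx, sub_self]
  have hδ : S *ᵥ δ = Φtᵀ *ᵥ r := by rw [mulVec_mulVec, mul_nonsing_inv _ hSdet, one_mulVec]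
  have hθxy : θxy = θx + δ := by
    have : Φᵀ *ᵥ x + Φtᵀ *ᵥ y = S *ᵥ θx + Φtᵀ *ᵥ r := by
      rw [add_mulVec, hθx, mulVec_sub, mulVec_mulVec θx Φtᵀ Φt]; abel
    rw [show θxy = S⁻¹ *ᵥ (Φᵀ *ᵥ x + Φtᵀ *ᵥ y) from rfl, this, mulVec_add, mulVec_mulVec,
      nonsing_inv_mul _ hSdet, one_mulVec]
  have hx : x - Φ *ᵥ θxy = u - Φ *ᵥ δ := by rw [hθxy, mulVec_add, sub_add_eq_sub_sub]
  have hy : y - Φt *ᵥ θxy = r - Φt *ᵥ δ := by rw [hθxy, mulVec_add, sub_add_eq_sub_sub]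
  have hhat : (Φt * S⁻¹ * Φtᵀ) *ᵥ r = Φt *ᵥ δ := by rw [← mulVec_mulVec, ← mulVec_mulVec]
  rw [hx, hy, hhat, dotProduct_self_sub_mulVec_of_transpose_mulVec_eq_zero Φ hu,
    dotProduct_self_sub_dotProduct_mulVec_of_mulVec_eq Φ Φt hδ]
  exact ⟨by ring, add_nonneg (dotProduct_self_star_nonneg _) (dotProduct_self_star_nonneg _)⟩
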